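/- Let f(u) = e^u − u − 1, for x > 2 let ζ(x) > 0 be the unique positive solution of u(e^u − 1)/f(u) = x, and let g(x) = (e^{ζ(x)} − 1)^x f(ζ(x))^{1−x}. Then for all x > 2, (d/dx) log g(x) = log((e^{ζ(x)} − 1)/f(ζ(x))) + 1. -/

import Mathlib

/-!
Write `A = e^u - 1`, `B = f(u) = A - u` and `φ(u) = u A / B` (`expRatio`), so that
`φ (ζ x) = x` and `log g(x) = x log A(ζ x) + (1 - x) log B(ζ x)`. Differentiating, the explicit
`x` contributes `log (A / B)` and the chain rule through `ζ` contributes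
`ζ'(x) (x e^ζ / A + (1 - x) A / B)`. Substituting `x = φ(ζ)`, the bracket is exactly `φ'(ζ)`,
and `ζ' = 1 / φ'(ζ)`, whence the `+ 1`. For the inverse function theorem, `φ' > 0` on `(0, ∞)`
because `u e^{u/2} < e^u - 1` (that is, `u/2 < sinh (u/2)`); so `φ` is strictly increasing and
its right inverse `ζ` is monotone with open image, hence continuous.
-/

open Real Set Filter Topology

lemma exp_sub_sub_one_pos {u : ℝ} (hu : u ≠ 0) : 0 < exp u - u - 1 := by
  linarith [add_one_lt_exp hu]

lemma exp_sub_one_pos {u : ℝ} (hu : 0 < u) : 0 < exp u - 1 :=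
  sub_pos.2 (one_lt_exp_iff.2 hu)

lemma exp_sub_one_eq_two_mul_sinh_mul_exp (u : ℝ) :
    exp u - 1 = 2 * sinh (u / 2) * exp (u / 2) := by
  have hsq : exp (u / 2) * exp (u / 2) = exp u := by rw [← exp_add, add_halves]
  have hinv : exp (-(u / 2)) * exp (u / 2) = 1 := by rw [← exp_add, neg_add_cancel, exp_zero]
  rw [sinh_eq]
  linear_combination hinv - hsq

lemma sq_mul_exp_lt_sq_exp_sub_one {u : ℝ} (hu : 0 < u) : u ^ 2 * exp u < (exp u - 1) ^ 2 := by
  have hsinh : u / 2 < sinh (u / 2) := self_lt_sinh_iff.2 (by positivity)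
  have hlt : u * exp (u / 2) < exp u - 1 := by
    rw [exp_sub_one_eq_two_mul_sinh_mul_exp]
    nlinarith [exp_pos (u / 2)]
  calc u ^ 2 * exp u = (u * exp (u / 2)) ^ 2 := by rw [mul_pow, sq (exp _), ← exp_add, add_halves]
    _ < (exp u - 1) ^ 2 := by gcongr

noncomputable def expRatio (u : ℝ) : ℝ := u * (exp u - 1) / (exp u - u - 1)

noncomputable def expRatioDeriv (u : ℝ) : ℝ :=
  ((exp u - 1) ^ 2 - u ^ 2 * exp u) / (exp u - u - 1) ^ 2

lemma expRatioDeriv_pos {u : ℝ} (hu : 0 < u) : 0 < expRatioDeriv u :=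
  div_pos (sub_pos.2 (sq_mul_exp_lt_sq_exp_sub_one hu)) (pow_pos (exp_sub_sub_one_pos hu.ne') 2)

lemma hasDerivAt_expRatio {u : ℝ} (hu : u ≠ 0) : HasDerivAt expRatio (expRatioDeriv u) u := by
  have hnum : HasDerivAt (fun v ↦ v * (exp v - 1)) (1 * (exp u - 1) + u * exp u) u :=
    (hasDerivAt_id u).mul ((hasDerivAt_exp u).sub_const 1)
  have hden : HasDerivAt (fun v ↦ exp v - v - 1) (exp u - 1) u := by
    simpa using ((hasDerivAt_exp u).sub (hasDerivAt_id u)).sub_const 1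
  refine (hnum.div hden (exp_sub_sub_one_pos hu).ne').congr_deriv ?_
  rw [expRatioDeriv]
  ring

lemma continuousOn_expRatio : ContinuousOn expRatio (Ioi 0) :=
  fun _ hu ↦ (hasDerivAt_expRatio (ne_of_gt hu)).continuousAt.continuousWithinAt

lemma strictMonoOn_expRatio : StrictMonoOn expRatio (Ioi 0) := by
  refine strictMonoOn_of_deriv_pos (convex_Ioi 0) continuousOn_expRatio ?_
  rw [interior_Ioi]
  intro u hu
  rw [(hasDerivAt_expRatio (ne_of_gt hu)).deriv]
  exact expRatioDeriv_pos hu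

lemma continuousAt_of_rightInvOn_of_strictMonoOn {φ ζ : ℝ → ℝ} {s t : Set ℝ} {x : ℝ}
    (hs : IsOpen s) (ht : IsOpen t) (hφ : StrictMonoOn φ s) (hφc : ContinuousOn φ s)
    (hζ : MapsTo ζ t s) (hinv : RightInvOn ζ φ t) (hx : x ∈ t) : ContinuousAt ζ x := by
  have hmono : MonotoneOn ζ t := fun y hy z hz hyz ↦ by
    by_contra! h
    have := hφ (hζ hz) (hζ hy) h
    rw [hinv hy, hinv hz] at this
    linarith
  have himage : ζ '' t = s ∩ φ ⁻¹' t := by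
    ext u
    refine ⟨?_, fun ⟨hu, hφu⟩ ↦ ⟨φ u, hφu, hφ.injOn (hζ hφu) hu (hinv hφu)⟩⟩
    rintro ⟨y, hy, rfl⟩
    exact ⟨hζ hy, by rwa [mem_preimage, hinv hy]⟩
  refine continuousAt_of_monotoneOn_of_image_mem_nhds hmono (ht.mem_nhds hx) ?_
  rw [himage]
  exact (hφc.isOpen_inter_preimage hs ht).mem_nhds (himage ▸ mem_image_of_mem ζ hx)

lemma hasDerivAt_of_rightInvOn_expRatio {ζ : ℝ → ℝ} {t : Set ℝ} {x : ℝ} (ht : IsOpen t)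
    (hζ : MapsTo ζ t (Ioi 0)) (hinv : RightInvOn ζ expRatio t) (hx : x ∈ t) :
    HasDerivAt ζ (expRatioDeriv (ζ x))⁻¹ x := by
  have hcont := continuousAt_of_rightInvOn_of_strictMonoOn isOpen_Ioi ht strictMonoOn_expRatio
    continuousOn_expRatio hζ hinv hx
  have hev : ∀ᶠ y in 𝓝 x, expRatio (ζ y) = y :=
    eventually_of_mem (ht.mem_nhds hx) hinv
  have hu : ζ x ≠ 0 := ne_of_gt (hζ hx)
  exact HasDerivAt.of_local_left_inverse hcont (hasDerivAt_expRatio hu)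
    (expRatioDeriv_pos (hζ hx)).ne' hev

lemma hasDerivAt_log_rpow_mul_rpow_one_sub {a b : ℝ → ℝ} {a' b' x : ℝ} (ha : HasDerivAt a a' x)
    (hb : HasDerivAt b b' x) (ha0 : 0 < a x) (hb0 : 0 < b x) :
    HasDerivAt (fun t ↦ log (a t ^ t * b t ^ (1 - t)))
      (log (a x / b x) + (x * (a' / a x) + (1 - x) * (b' / b x))) x := by
  have hlog : (fun t ↦ log (a t ^ t * b t ^ (1 - t))) =ᶠ[𝓝 x]
      fun t ↦ t * log (a t) + (1 - t) * log (b t) := by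
    filter_upwards [ha.continuousAt.eventually (lt_mem_nhds ha0),
      hb.continuousAt.eventually (lt_mem_nhds hb0)] with t hat hbt
    rw [log_mul (rpow_pos_of_pos hat t).ne' (rpow_pos_of_pos hbt _).ne', log_rpow hat,
      log_rpow hbt]
  have hsum := ((hasDerivAt_id' x).mul (ha.log ha0.ne')).add
    (((hasDerivAt_id' x).const_sub 1).mul (hb.log hb0.ne'))
  refine (hsum.congr_of_eventuallyEq hlog).congr_deriv ?_
  rw [log_div ha0.ne' hb0.ne']
  ring

lemma expRatio_mul_add_one_sub_expRatio_mul {u : ℝ} (hu : 0 < u) :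
    expRatio u * (exp u / (exp u - 1)) + (1 - expRatio u) * ((exp u - 1) / (exp u - u - 1)) =
      expRatioDeriv u := by
  have hA := (exp_sub_one_pos hu).ne'
  have hB := (exp_sub_sub_one_pos hu.ne').ne'
  rw [expRatio, expRatioDeriv]
  field_simp
  ring

/-- With `f(u) = e^u - u - 1`, `ζ(x)` the unique positive root of
`ζ(e^ζ-1)/f(ζ) = x` for `x > 2`, and `g(x) = (e^{ζ(x)}-1)^x f(ζ(x))^{1-x}`, one has
`(d/dx) log g(x) = log((e^{ζ(x)}-1)/f(ζ(x))) + 1` for all `x > 2`. -/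
theorem stmt_13 (f ζ g : ℝ → ℝ)
    (hf : ∀ u, f u = Real.exp u - u - 1)
    (hζ : ∀ x > 2, 0 < ζ x ∧ ζ x * (Real.exp (ζ x) - 1) / f (ζ x) = x)
    (hg : ∀ x, g x = (Real.exp (ζ x) - 1) ^ x * f (ζ x) ^ (1 - x)) :
    ∀ x > 2,
      HasDerivAt (fun t => Real.log (g t))
        (Real.log ((Real.exp (ζ x) - 1) / f (ζ x)) + 1) x := by
  intro x hx
  have hζpos : MapsTo ζ (Ioi 2) (Ioi 0) := fun y hy ↦ (hζ y hy).1
  have hinv : RightInvOn ζ expRatio (Ioi 2) := fun y hy ↦ by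
    simpa only [expRatio, hf] using (hζ y hy).2
  have hu : 0 < ζ x := hζpos hx
  have hζ' := hasDerivAt_of_rightInvOn_expRatio isOpen_Ioi hζpos hinv hx
  have hlog := hasDerivAt_log_rpow_mul_rpow_one_sub (hζ'.exp.sub_const 1)
    ((hζ'.exp.sub hζ').sub_const 1) (exp_sub_one_pos hu) (exp_sub_sub_one_pos hu.ne')
  have hd : expRatioDeriv (ζ x) * (expRatioDeriv (ζ x))⁻¹ = 1 :=
    mul_inv_cancel₀ (expRatioDeriv_pos hu).ne'
  have hbracket := expRatio_mul_add_one_sub_expRatio_mul hu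
  rw [hinv hx] at hbracket
  simp only [hg, hf]
  refine hlog.congr_deriv ?_
  simp only [Pi.sub_apply]
  linear_combination (expRatioDeriv (ζ x))⁻¹ * hbracket + hd
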